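/- arXiv:2604.19371 — 7 statements merged into one kernel-verified Lean document; each statement's English description precedes it below -/
import Mathlib

section
/- Let P be a pattern and T a text. The set of starting positions of occurrences of P in T can be partitioned into O(|T|/|P|) arithmetic progressions whose common difference is per(P), the smallest period of P. -/
/-- `P` occurs in `T` at (0-indexed) position `i`. -/
def isOcc (P T : List ℕ) (i : ℕ) : Prop :=
  i + P.length ≤ T.length ∧ ∀ k < P.length, T.getD (i + k) 0 = P.getD k 0

/-- The smallest period of a string `P`: the least `q > 0` such that
`P[i] = P[i+q]` for all valid `i`. -/
noncomputable def minPer (P : List ℕ) : ℕ :=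
  sInf {q | 0 < q ∧ ∀ i, i + q < P.length → P.getD i 0 = P.getD (i + q) 0}

/-- `q` is a period of `S`. -/
def Per (S : List ℕ) (q : ℕ) : Prop :=
  ∀ i, i + q < S.length → S.getD i 0 = S.getD (i + q) 0

lemma per_iterate {S : List ℕ} {p : ℕ} (hp : Per S p) :
    ∀ m x, x + m * p < S.length → S.getD x 0 = S.getD (x + m * p) 0 := by
  intro m
  induction m with
  | zero => simp
  | succ m ih =>
    intro x hx
    have e : x + (m + 1) * p = (x + m * p) + p := by ring
    rw [e] at hx ⊢
    have h1 : x + m * p < S.length := by omega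
    rw [ih x h1]
    exact hp (x + m * p) hx

lemma per_sub {S : List ℕ} {p q : ℕ} (hpq : p < q) (_h0 : 0 < p)
    (hlen : p + q ≤ S.length) (hPp : Per S p) (hPq : Per S q) : Per S (q - p) := by
  intro i hi
  by_cases hcase : i + q < S.length
  · have h1 := hPq i hcase
    have h2 := hPp (i + q - p) (by omega)
    have e : i + q - p + p = i + q := by omega
    rw [e] at h2
    rw [h1, ← h2]
    congr 1
    omega
  · have hip : p ≤ i := by omega
    have h1 := hPp (i - p) (by omega)
    have h2 := hPq (i - p) (by omega)
    have e1 : i - p + p = i := by omega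
    have e2 : i - p + q = i + (q - p) := by omega
    rw [e1] at h1
    rw [e2] at h2
    rw [← h1, h2]

/-- Weak Fine–Wilf periodicity lemma. -/
lemma fine_wilf : ∀ n p q (S : List ℕ), p + q ≤ n → 0 < p → 0 < q →
    p + q ≤ S.length → Per S p → Per S q → Per S (Nat.gcd p q) := by
  intro n
  induction n using Nat.strong_induction_on with
  | _ n ih =>
    intro p q S hn hp hq hlen hPp hPq
    rcases lt_trichotomy p q with h | h | h
    · have hq' : Per S (q - p) := per_sub h hp hlen hPp hPq
      have hg : Nat.gcd p (q - p) = Nat.gcd p q := Nat.gcd_sub_self_right (le_of_lt h)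
      rw [← hg]
      exact ih q (by omega) p (q - p) S (by omega) hp (by omega) (by omega) hPp hq'
    · subst h; rw [Nat.gcd_self]; exact hPp
    · have hp' : Per S (p - q) := per_sub h hq (by omega) hPq hPp
      have hg : Nat.gcd q (p - q) = Nat.gcd q p := Nat.gcd_sub_self_right (le_of_lt h)
      rw [Nat.gcd_comm, ← hg]
      exact ih p (by omega) q (p - q) S (by omega) hq (by omega) (by omega) hPq hp'

/-- The starting positions of occurrences of a pattern `P` in a text `T` can be
partitioned into `O(|T|/|P|)` (pairwise disjoint) arithmetic progressions with
common difference `per(P)`. -/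
theorem stmt3 :
    ∃ C : ℕ, 0 < C ∧ ∀ (P T : List ℕ), P ≠ [] →
      ∃ (k : ℕ) (a len : Fin k → ℕ),
        k * P.length ≤ C * T.length ∧
        (∀ i : ℕ, isOcc P T i ↔ ∃ j : Fin k, ∃ t < len j, i = a j + t * minPer P) ∧
        (∀ (j1 j2 : Fin k) (t1 t2 : ℕ), t1 < len j1 → t2 < len j2 →
          a j1 + t1 * minPer P = a j2 + t2 * minPer P → j1 = j2 ∧ t1 = t2) := by
  classical
  refine ⟨4, by norm_num, ?_⟩
  intro P T hP
  set p := minPer P with hpdef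
  have hPlen : 0 < P.length := List.length_pos_iff.mpr hP
  have hQne : ({q | 0 < q ∧ ∀ i, i + q < P.length → P.getD i 0 = P.getD (i + q) 0} : Set ℕ).Nonempty :=
    ⟨P.length, hPlen, fun i hi => absurd hi (by omega)⟩
  have hmem := Nat.sInf_mem hQne
  have hp0 : 0 < p := hmem.1
  have hPp : Per P p := hmem.2
  have hple : p ≤ P.length := Nat.sInf_le ⟨hPlen, fun i hi => absurd hi (by omega)⟩
  have hmin : ∀ q, 0 < q → Per P q → p ≤ q := fun q h1 h2 => Nat.sInf_le ⟨h1, h2⟩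
  have hOccB : ∀ i, isOcc P T i → i ≤ T.length := fun i h => by have := h.1; omega
  -- two overlapping occurrences give a period
  have overlap : ∀ s d, isOcc P T s → isOcc P T (s + d) → d < P.length → Per P d := by
    intro s d h1 h2 hd x hx
    have e1 := h1.2 (x + d) hx
    have e2 := h2.2 x (by omega)
    rw [← e1, ← e2]
    congr 1
    omega
  -- key periodicity step
  have step : ∀ s d, isOcc P T s → isOcc P T (s + d) → 0 < d → d < P.length →
      d + p ≤ P.length → isOcc P T (s + d - p) := by
    intro s d h1 h2 hd0 hd hdp
    have hPd : Per P d := overlap s d h1 h2 hd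
    have hpd : p ≤ d := hmin d hd0 hPd
    have hgcd : Per P (Nat.gcd p d) := fine_wilf (p + d) p d P le_rfl hp0 hd0 (by omega) hPp hPd
    have hg0 : 0 < Nat.gcd p d := Nat.gcd_pos_of_pos_left _ hp0
    have hge : p ≤ Nat.gcd p d := hmin _ hg0 hgcd
    have hgp : Nat.gcd p d = p := le_antisymm (Nat.gcd_le_left _ hp0) hge
    have hdvd : p ∣ d := hgp ▸ Nat.gcd_dvd_right p d
    constructor
    · have := h2.1; omega
    · intro x hx
      by_cases hcase : d - p + x < P.length
      · have e1 := h1.2 (d - p + x) hcase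
        have e0 : s + d - p + x = s + (d - p + x) := by omega
        rw [e0, e1]
        obtain ⟨m, hm⟩ : p ∣ d - p := Nat.dvd_sub hdvd dvd_rfl
        have hm' : d - p = m * p := by rw [hm, Nat.mul_comm]
        have e3 : d - p + x = x + m * p := by omega
        rw [e3]
        exact (per_iterate hPp m x (by omega)).symm
      · have hxp : p < x := by omega
        have e2 := h2.2 (x - p) (by omega)
        have e0 : s + d - p + x = s + d + (x - p) := by omega
        rw [e0, e2]
        have h3 := hPp (x - p) (by omega)
        have e4 : x - p + p = x := by omega
        rw [e4] at h3
        exact h3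
  -- the set of chain starts
  set starts : Finset ℕ := (Finset.range (T.length + 1)).filter
      (fun i => isOcc P T i ∧ ¬ (p ≤ i ∧ isOcc P T (i - p))) with hstartsdef
  have hstarts_mem : ∀ s, s ∈ starts ↔ isOcc P T s ∧ ¬ (p ≤ s ∧ isOcc P T (s - p)) := by
    intro s
    rw [hstartsdef, Finset.mem_filter, Finset.mem_range]
    constructor
    · rintro ⟨_, h⟩; exact h
    · intro h; exact ⟨by have := hOccB s h.1; omega, h⟩
  set k := starts.card with hk
  set e := starts.orderIsoOfFin hk.symm with hedef
  set a : Fin k → ℕ := fun j => (e j : ℕ) with hadef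
  have haM : ∀ j, a j ∈ starts := fun j => (e j).2
  have hamono : ∀ j1 j2 : Fin k, j1 < j2 → a j1 < a j2 := by
    intro j1 j2 h
    exact Subtype.coe_lt_coe.mpr (e.strictMono h)
  have hainj : Function.Injective a := by
    intro j1 j2 h
    exact e.injective (Subtype.val_injective h)
  have hasurj : ∀ s ∈ starts, ∃ j, a j = s := by
    intro s hs
    exact ⟨e.symm ⟨s, hs⟩, by simp [hadef]⟩
  set len : Fin k → ℕ := fun j => sInf {t | ¬ isOcc P T (a j + t * p)} with hlendef
  have hMne : ∀ x : ℕ, {t | ¬ isOcc P T (x + t * p)}.Nonempty := by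
    intro x
    refine ⟨T.length + 1, fun h => ?_⟩
    have h1 := hOccB _ h
    nlinarith
  have hOccSet : ∀ j t, t < len j → isOcc P T (a j + t * p) := by
    intro j t ht
    by_contra hc
    have h2 := Nat.sInf_le (show t ∈ {t | ¬ isOcc P T (a j + t * p)} from hc)
    simp only [hlendef] at ht
    omega
  have hlen_lt : ∀ j m, (∀ t ≤ m, isOcc P T (a j + t * p)) → m < len j := by
    intro j m h
    by_contra hc
    push_neg at hc
    have hmem2 := Nat.sInf_mem (hMne (a j))
    simp only [hlendef] at hc
    exact hmem2 (h _ hc)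
  -- every occurrence lies on a chain
  have walk : ∀ i, isOcc P T i →
      ∃ s m, s ∈ starts ∧ i = s + m * p ∧ ∀ t ≤ m, isOcc P T (s + t * p) := by
    intro i
    induction i using Nat.strong_induction_on with
    | _ i ih =>
      intro hi
      by_cases hc : p ≤ i ∧ isOcc P T (i - p)
      · obtain ⟨s, m, hs, he, hall⟩ := ih (i - p) (by omega) hc.2
        have hmul : (m + 1) * p = m * p + p := by ring
        refine ⟨s, m + 1, hs, by omega, ?_⟩
        intro t ht
        rcases Nat.lt_or_ge t (m + 1) with h | h
        · exact hall t (by omega)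
        · have het : t = m + 1 := by omega
          rw [het]
          have he2 : s + (m + 1) * p = i := by omega
          rw [he2]; exact hi
      · refine ⟨i, 0, (hstarts_mem i).mpr ⟨hi, hc⟩, by simp, ?_⟩
        intro t ht
        have : t = 0 := by omega
        subst this
        simpa using hi
  -- gap between chain starts
  have gap : ∀ s1 s2, s1 ∈ starts → s2 ∈ starts → s1 < s2 → P.length + 1 ≤ 2 * (s2 - s1) := by
    intro s1 s2 h1 h2 hlt
    obtain ⟨ho1, _⟩ := (hstarts_mem s1).mp h1
    obtain ⟨ho2, hn2⟩ := (hstarts_mem s2).mp h2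
    set d := s2 - s1 with hd
    have hs2 : s2 = s1 + d := by omega
    rw [hs2] at ho2 hn2
    by_cases hdP : d < P.length
    · have hPd : Per P d := overlap s1 d ho1 ho2 hdP
      have hpd : p ≤ d := hmin d (by omega) hPd
      by_cases hdp : d + p ≤ P.length
      · exfalso
        apply hn2
        refine ⟨by omega, ?_⟩
        exact step s1 d ho1 ho2 (by omega) hdP hdp
      · omega
    · omega
  refine ⟨k, a, len, ?_, ?_, ?_⟩
  · -- counting
    rcases Nat.eq_zero_or_pos k with hk0 | hk0
    · rw [hk0]; simp
    · obtain ⟨k', hk'⟩ : ∃ k', k = k' + 1 := ⟨k - 1, by omega⟩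
      have hne : starts.Nonempty := Finset.card_pos.mp hk0
      obtain ⟨s0, hs0⟩ := hne
      have hPT : P.length ≤ T.length := by
        have := ((hstarts_mem s0).mp hs0).1.1; omega
      have key : ∀ j : ℕ, ∀ h : j < k, j * (P.length + 1) ≤ 2 * a ⟨j, h⟩ := by
        intro j
        induction j with
        | zero => simp
        | succ j ih =>
          intro h
          have hj : j < k := by omega
          have hlt : a ⟨j, hj⟩ < a ⟨j + 1, h⟩ := hamono _ _ (by simp)
          have hgap := gap _ _ (haM ⟨j, hj⟩) (haM ⟨j + 1, h⟩) hlt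
          have hih := ih hj
          have hm : (j + 1) * (P.length + 1) = j * (P.length + 1) + (P.length + 1) := by ring
          omega
      have hlast := key k' (by omega)
      have hbound : a ⟨k', by omega⟩ ≤ T.length := hOccB _ ((hstarts_mem _).mp (haM _)).1
      have hm1 : k' * (P.length + 1) = k' * P.length + k' := by ring
      have hm2 : k * P.length = k' * P.length + P.length := by rw [hk']; ring
      omega
  · -- characterization
    intro i
    constructor
    · intro hi
      obtain ⟨s, m, hs, heq, hall⟩ := walk i hi
      obtain ⟨j, hj⟩ := hasurj s hs
      refine ⟨j, m, ?_, by rw [hj]; exact heq⟩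
      apply hlen_lt
      intro t ht
      rw [hj]
      exact hall t ht
    · rintro ⟨j, t, ht, rfl⟩
      exact hOccSet j t ht
  · -- disjointness
    have main : ∀ (j1 j2 : Fin k) (t1 t2 : ℕ), t1 < len j1 → t2 < len j2 → t2 ≤ t1 →
        a j1 + t1 * p = a j2 + t2 * p → j1 = j2 ∧ t1 = t2 := by
      intro j1 j2 t1 t2 h1 h2 hle heq
      rcases Nat.eq_or_lt_of_le hle with h | h
      · subst h
        have : a j1 = a j2 := by omega
        exact ⟨hainj this, rfl⟩
      · exfalso
        obtain ⟨_, hn⟩ := (hstarts_mem _).mp (haM j2)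
        apply hn
        have hsum : (t1 - t2) * p + t2 * p = t1 * p := by
          rw [← Nat.add_mul]
          congr 1
          omega
        have e : a j2 = a j1 + (t1 - t2) * p := by omega
        have h4 : t1 - t2 = (t1 - t2 - 1) + 1 := by omega
        have h3 : (t1 - t2) * p = (t1 - t2 - 1) * p + p := by
          nth_rewrite 1 [h4]
          rw [Nat.succ_mul]
        constructor
        · omega
        · have e2 : a j2 - p = a j1 + (t1 - t2 - 1) * p := by omega
          rw [e2]
          exact hOccSet j1 (t1 - t2 - 1) (by omega)
    intro j1 j2 t1 t2 h1 h2 heq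
    rcases le_total t2 t1 with h | h
    · exact main j1 j2 t1 t2 h1 h2 h heq
    · obtain ⟨hj, ht⟩ := main j2 j1 t2 t1 h2 h1 h heq.symm
      exact ⟨hj.symm, ht.symm⟩
end

section
/- Let B be a string of length 3τ − 1 and let ℓ ≤ r be positions in [1, τ+1] such that the length-(2τ−1) fragments B[ℓ..ℓ+2τ−2] and B[r..r+2τ−2] both have smallest period at most τ/3. Then the entire fragment B[ℓ..r+2τ−2] has period equal to per(B[ℓ..ℓ+2τ−2]) = per(B[r..r+2τ−2]). -/
/-- The smallest period of the length-`len` fragment of `B` starting at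
position `s`: the least `q > 0` with `B[s+i] = B[s+i+q]` whenever `i+q < len`. -/
noncomputable def fragPer (B : ℕ → ℕ) (s len : ℕ) : ℕ :=
  sInf {q | 0 < q ∧ ∀ i, i + q < len → B (s + i) = B (s + i + q)}

/-- If `f` has period `q` on `[0,L)` and period `p` on the prefix `[0,m)`
with `p + q ≤ m`, then `f` has period `p` on all of `[0,L)`. -/
private lemma extendRight (f : ℕ → ℕ) (L m p q : ℕ) (hp0 : 0 < p) (hq0 : 0 < q)
    (hq : ∀ i, i + q < L → f i = f (i + q))
    (hp : ∀ i, i + p < m → f i = f (i + p)) (hm : p + q ≤ m) :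
    ∀ i, i + p < L → f i = f (i + p) := by
  intro i
  induction i using Nat.strong_induction_on with
  | _ i IH =>
    intro hiL
    by_cases h : i + p < m
    · exact hp i h
    · push_neg at h
      obtain ⟨j, rfl⟩ : ∃ j, i = j + q := ⟨i - q, by omega⟩
      have h1 : f j = f (j + q) := hq j (by omega)
      have h2 : f (j + p) = f (j + p + q) := hq (j + p) (by omega)
      have h3 : f j = f (j + p) := IH j (by omega) (by omega)
      calc f (j + q) = f j := h1.symm
        _ = f (j + p + q) := h3.trans h2
        _ = f (j + q + p) := by congr 1; ring

/-- If `f` has period `p` on `[0,L)` and period `q` on the suffix `[s,L)`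
with `s + p + q ≤ L`, then `f` has period `q` on all of `[0,L)`. -/
private lemma extendLeft (f : ℕ → ℕ) (L s p q : ℕ) (hp0 : 0 < p)
    (hp : ∀ i, i + p < L → f i = f (i + p))
    (hq : ∀ i, s ≤ i → i + q < L → f i = f (i + q))
    (hm : s + p + q ≤ L) :
    ∀ i, i + q < L → f i = f (i + q) := by
  have key : ∀ n i, s - i ≤ n → i + q < L → f i = f (i + q) := by
    intro n
    induction n with
    | zero => intro i h hL; exact hq i (by omega) hL
    | succ n IH =>
      intro i h hL
      by_cases hs : s ≤ i
      · exact hq i hs hL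
      · have h1 : f i = f (i + p) := hp i (by omega)
        have h2 : f (i + q) = f (i + q + p) := hp (i + q) (by omega)
        have h3 : f (i + p) = f (i + p + q) := IH (i + p) (by omega) (by omega)
        calc f i = f (i + p + q) := h1.trans h3
          _ = f (i + q + p) := by congr 1; ring
          _ = f (i + q) := h2.symm
  intro i hL; exact key s i (by omega) hL

/-- If the two length-`(2τ−1)` fragments of `B` starting at positions
`ℓ ≤ r` (both in `[1, τ+1]`) have smallest periods at most `τ/3`, then the
whole fragment `B[ℓ..r+2τ−2]` has (smallest) period equal to the common value
`per(B[ℓ..ℓ+2τ−2]) = per(B[r..r+2τ−2])`. -/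
theorem stmt5 (τ ℓ r : ℕ) (B : ℕ → ℕ)
    (hτ : 1 ≤ τ) (hℓ : 1 ≤ ℓ) (hℓr : ℓ ≤ r) (hr : r ≤ τ + 1)
    (hpℓ : 3 * fragPer B ℓ (2 * τ - 1) ≤ τ)
    (hpr : 3 * fragPer B r (2 * τ - 1) ≤ τ) :
    fragPer B ℓ (2 * τ - 1) = fragPer B r (2 * τ - 1) ∧
    fragPer B ℓ (r + 2 * τ - 1 - ℓ) = fragPer B ℓ (2 * τ - 1) := by
  obtain ⟨d, rfl⟩ : ∃ d, r = ℓ + d := ⟨r - ℓ, by omega⟩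
  set p := fragPer B ℓ (2 * τ - 1) with hp_def
  set q := fragPer B (ℓ + d) (2 * τ - 1) with hq_def
  have hneℓ : {x | 0 < x ∧ ∀ i, i + x < 2 * τ - 1 → B (ℓ + i) = B (ℓ + i + x)}.Nonempty :=
    ⟨2 * τ - 1, by omega, fun i hi => absurd hi (by omega)⟩
  have hner : {x | 0 < x ∧ ∀ i, i + x < 2 * τ - 1 → B (ℓ + d + i) = B (ℓ + d + i + x)}.Nonempty :=
    ⟨2 * τ - 1, by omega, fun i hi => absurd hi (by omega)⟩
  have hmemℓ : 0 < p ∧ ∀ i, i + p < 2 * τ - 1 → B (ℓ + i) = B (ℓ + i + p) :=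
    Nat.sInf_mem hneℓ
  have hmemr : 0 < q ∧ ∀ i, i + q < 2 * τ - 1 → B (ℓ + d + i) = B (ℓ + d + i + q) :=
    Nat.sInf_mem hner
  obtain ⟨hp0, hperL⟩ := hmemℓ
  obtain ⟨hq0, hperR⟩ := hmemr
  have hτ3 : 3 ≤ τ := by omega
  have hd : d ≤ τ := by omega
  have hsum : d + p + q ≤ 2 * τ - 1 := by omega
  -- work with f i = B (ℓ + i)
  set f : ℕ → ℕ := fun i => B (ℓ + i) with hf_def
  have hfp : ∀ i, i + p < 2 * τ - 1 → f i = f (i + p) := by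
    intro i hi
    have := hperL i hi
    simpa [hf_def, Nat.add_assoc] using this
  have hfq : ∀ i, d ≤ i → i + q < 2 * τ - 1 → f i = f (i + q) := by
    intro i hi hiq
    obtain ⟨j, rfl⟩ : ∃ j, i = d + j := ⟨i - d, by omega⟩
    have := hperR j (by omega)
    simpa [hf_def, Nat.add_assoc] using this
  -- q is a period of the left fragment, hence p ≤ q
  have hqleft : ∀ i, i + q < 2 * τ - 1 → f i = f (i + q) :=
    extendLeft f (2 * τ - 1) d p q hp0 hfp hfq hsum
  have hpq : p ≤ q := by
    apply Nat.sInf_le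
    exact ⟨hq0, fun i hi => by simpa [hf_def, Nat.add_assoc] using hqleft i hi⟩
  -- p is a period of the right fragment, hence q ≤ p
  set g : ℕ → ℕ := fun i => B (ℓ + d + i) with hg_def
  have hgq : ∀ i, i + q < 2 * τ - 1 → g i = g (i + q) := fun i hi => by
    simpa [hg_def, Nat.add_assoc] using hperR i hi
  have hgp_pre : ∀ i, i + p < 2 * τ - 1 - d → g i = g (i + p) := by
    intro i hi
    have := hfp (d + i) (by omega)
    simpa [hf_def, hg_def, Nat.add_assoc] using this
  have hgp : ∀ i, i + p < 2 * τ - 1 → g i = g (i + p) :=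
    extendRight g (2 * τ - 1) (2 * τ - 1 - d) p q hp0 hq0 hgq hgp_pre (by omega)
  have hqp : q ≤ p := Nat.sInf_le ⟨hp0, fun i hi => by simpa [hg_def, Nat.add_assoc] using hgp i hi⟩
  have hpq_eq : p = q := le_antisymm hpq hqp
  refine ⟨hpq_eq, ?_⟩
  -- the combined fragment has length d + 2τ - 1
  have hlen : ℓ + d + 2 * τ - 1 - ℓ = d + (2 * τ - 1) := by omega
  -- p is a period of the combined fragment
  have hcomb : ∀ i, i + p < d + (2 * τ - 1) → f i = f (i + p) := by
    intro i hi
    by_cases h : i + p < 2 * τ - 1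
    · exact hfp i h
    · obtain ⟨j, rfl⟩ : ∃ j, i = d + j := ⟨i - d, by omega⟩
      have := hgp j (by omega)
      rw [hpq_eq]
      simpa [hf_def, hg_def, Nat.add_assoc, hpq_eq] using this
  have hmemc : p ∈ {x | 0 < x ∧ ∀ i, i + x < ℓ + d + 2 * τ - 1 - ℓ →
      B (ℓ + i) = B (ℓ + i + x)} := by
    refine ⟨hp0, fun i hi => ?_⟩
    have := hcomb i (by omega)
    simpa [hf_def, Nat.add_assoc] using this
  have h1 : fragPer B ℓ (ℓ + d + 2 * τ - 1 - ℓ) ≤ p := Nat.sInf_le hmemc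
  have h2 : p ≤ fragPer B ℓ (ℓ + d + 2 * τ - 1 - ℓ) := by
    have hnec : {x | 0 < x ∧ ∀ i, i + x < ℓ + d + 2 * τ - 1 - ℓ →
        B (ℓ + i) = B (ℓ + i + x)}.Nonempty := ⟨p, hmemc⟩
    have hm : 0 < fragPer B ℓ (ℓ + d + 2 * τ - 1 - ℓ) ∧
        ∀ i, i + fragPer B ℓ (ℓ + d + 2 * τ - 1 - ℓ) < ℓ + d + 2 * τ - 1 - ℓ →
          B (ℓ + i) = B (ℓ + i + fragPer B ℓ (ℓ + d + 2 * τ - 1 - ℓ)) :=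
      Nat.sInf_mem hnec
    apply Nat.sInf_le
    exact ⟨hm.1, fun i hi => hm.2 i (by omega)⟩
  omega
end

section
/- Fix strings T and R, and let z be the number of factors in the greedy Lempel–Ziv factorization of T relative to R. Then any α-optimal R-factorization of T consists of at most α·z phrases. -/
/-- Length of the longest prefix of `T` that is a substring of `R`. -/
def lpf (R T : List ℕ) : ℕ :=
  Nat.findGreatest (fun ℓ => (T.take ℓ) <:+: R) T.length

/-- The greedy Lempel–Ziv factorization of `T` relative to `R`: each factor is
either a single symbol (when no nonempty prefix of the remaining suffix occurs
in `R`) or the longest prefix of the remaining suffix occurring in `R`. -/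
def rlz (R : List ℕ) (T : List ℕ) : List (List ℕ) :=
  if hT : T = [] then []
  else if h0 : lpf R T = 0 then [T.headI] :: rlz R T.tail
  else T.take (lpf R T) :: rlz R (T.drop (lpf R T))
termination_by T.length
decreasing_by
  · cases T with
    | nil => exact absurd rfl hT
    | cons a t => simp
  · have h1 : T.length ≠ 0 := fun h => hT (List.eq_nil_of_length_eq_zero h)
    simp only [List.length_drop]
    omega

/-- An `R`-factorization of `T`: a decomposition of `T` into nonempty phrases,
each of which is a single symbol or a substring of `R`. -/
def IsRFactorization (R T : List ℕ) (fs : List (List ℕ)) : Prop :=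
  fs.flatten = T ∧ ∀ f ∈ fs, f ≠ [] ∧ (f.length = 1 ∨ f <:+: R)

/-- `fs` is `α`-optimal: no `α` consecutive phrases concatenate to a substring
of `R`. -/
def AlphaOptimal (R : List ℕ) (α : ℕ) (fs : List (List ℕ)) : Prop :=
  ∀ i, i + α ≤ fs.length → ¬ (((fs.drop i).take α).flatten <:+: R)

/-!
Cut `fs` into consecutive blocks of `α` phrases. By `α`-optimality a block is not a substring of
`R`, so it is strictly longer than the longest prefix of the remaining text that occurs in `R`:
it ends beyond the first greedy phrase of that text. Greedy parsing of a suffix never needs more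
phrases than greedy parsing of the whole text (a greedy phrase starting inside another one reaches
at least as far), so every block accounts for at least one phrase of `rlz R T`.
-/

theorem rlz_nil (R : List ℕ) : rlz R [] = [] := by
  rw [rlz]; simp

theorem lpf_le_length (R T : List ℕ) : lpf R T ≤ T.length := Nat.findGreatest_le _

theorem take_lpf_infix (R T : List ℕ) : T.take (lpf R T) <:+: R :=
  Nat.findGreatest_spec (P := fun ℓ => T.take ℓ <:+: R) (Nat.zero_le _) (by simp)

theorem le_lpf {R T : List ℕ} {m : ℕ} (hm : m ≤ T.length) (h : T.take m <:+: R) :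
    m ≤ lpf R T :=
  Nat.le_findGreatest hm h

theorem lpf_lt_length_of_prefix {R T P : List ℕ} (hP : P <+: T) (hPR : ¬ P <:+: R) :
    lpf R T < P.length := by
  by_contra! h
  apply hPR
  have hPtake : P = (T.take (lpf R T)).take P.length := by
    rw [List.take_take, min_eq_left h, ← List.prefix_iff_eq_take.1 hP]
  rw [hPtake]
  exact (List.take_prefix _ _).isInfix.trans (take_lpf_infix R T)

theorem lpf_le_add_lpf_drop (R T : List ℕ) (k : ℕ) : lpf R T ≤ k + lpf R (T.drop k) := by
  suffices lpf R T - k ≤ lpf R (T.drop k) by omega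
  apply le_lpf
  · have := lpf_le_length R T
    simp only [List.length_drop]
    omega
  · rw [← List.drop_take]
    exact (List.drop_suffix _ _).isInfix.trans (take_lpf_infix R T)

def firstPhraseLength (R T : List ℕ) : ℕ := max 1 (lpf R T)

theorem length_rlz_of_ne_nil (R : List ℕ) {T : List ℕ} (hT : T ≠ []) :
    (rlz R T).length = (rlz R (T.drop (firstPhraseLength R T))).length + 1 := by
  rw [rlz]
  rcases eq_or_ne (lpf R T) 0 with h0 | h0
  · simp [hT, h0, firstPhraseLength, List.drop_one]
  · simp [hT, h0, firstPhraseLength, Nat.one_le_iff_ne_zero.2 h0]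

theorem length_rlz_drop_le (R T : List ℕ) (k : ℕ) :
    (rlz R (T.drop k)).length ≤ (rlz R T).length := by
  by_cases hTk : T.drop k = []
  · simp [hTk, rlz_nil]
  have hT : T ≠ [] := by rintro rfl; simp at hTk
  have hreach : firstPhraseLength R T ≤ k + firstPhraseLength R (T.drop k) := by
    have := lpf_le_add_lpf_drop R T k
    simp only [firstPhraseLength]
    omega
  have ih := length_rlz_drop_le R (T.drop (firstPhraseLength R T))
    (k + firstPhraseLength R (T.drop k) - firstPhraseLength R T)
  rw [List.drop_drop, Nat.add_sub_cancel' hreach] at ih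
  rw [length_rlz_of_ne_nil R hTk, List.drop_drop, length_rlz_of_ne_nil R hT]
  omega
termination_by T.length
decreasing_by
  have := List.length_pos_of_ne_nil hT
  simp only [List.length_drop, firstPhraseLength]
  omega

theorem length_rlz_drop_lt_of_lpf_lt (R : List ℕ) {T : List ℕ} (hT : T ≠ []) {k : ℕ}
    (hk : lpf R T < k) : (rlz R (T.drop k)).length < (rlz R T).length := by
  have hz := length_rlz_drop_le R (T.drop (firstPhraseLength R T)) (k - firstPhraseLength R T)
  rw [List.drop_drop, Nat.add_sub_cancel' (by simp only [firstPhraseLength]; omega)] at hz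
  rw [length_rlz_of_ne_nil R hT]
  omega

namespace IsRFactorization

variable {R T : List ℕ} {fs : List (List ℕ)}

theorem ne_nil (h : IsRFactorization R T fs) (hfs : fs ≠ []) : T ≠ [] := by
  obtain ⟨f, fs', rfl⟩ := List.exists_cons_of_ne_nil hfs
  rw [← h.1, List.flatten_cons]
  exact List.append_ne_nil_of_left_ne_nil (h.2 f List.mem_cons_self).1 _

theorem flatten_take_prefix (h : IsRFactorization R T fs) (n : ℕ) : (fs.take n).flatten <+: T :=
  ⟨(fs.drop n).flatten, by rw [← List.flatten_append, List.take_append_drop, h.1]⟩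

theorem drop (h : IsRFactorization R T fs) (n : ℕ) :
    IsRFactorization R (T.drop (fs.take n).flatten.length) (fs.drop n) := by
  refine ⟨?_, fun f hf => h.2 f (List.mem_of_mem_drop hf)⟩
  calc (fs.drop n).flatten
      = ((fs.take n).flatten ++ (fs.drop n).flatten).drop (fs.take n).flatten.length :=
        List.drop_left.symm
    _ = T.drop (fs.take n).flatten.length := by
        rw [← List.flatten_append, List.take_append_drop, h.1]

end IsRFactorization

theorem AlphaOptimal.drop {R : List ℕ} {α : ℕ} {fs : List (List ℕ)} (h : AlphaOptimal R α fs)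
    (n : ℕ) : AlphaOptimal R α (fs.drop n) := by
  intro i hi
  simp only [List.length_drop] at hi
  rw [List.drop_drop]
  by_cases hni : n + i ≤ fs.length
  · exact h (n + i) (by omega)
  · obtain rfl : α = 0 := by omega
    exact fun _ => h 0 (by omega) (by simp)

/-- Any `α`-optimal `R`-factorization of `T` has at most `α·z` phrases,
where `z = |rlz(T,R)|` is the size of the greedy relative LZ factorization. -/
theorem stmt7 (R T : List ℕ) (α : ℕ) (fs : List (List ℕ))
    (hfact : IsRFactorization R T fs) (hopt : AlphaOptimal R α fs) :
    fs.length ≤ α * (rlz R T).length := by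
  rcases eq_or_ne fs [] with rfl | hfs
  · simp
  have hT := hfact.ne_nil hfs
  have hz := length_rlz_of_ne_nil R hT
  by_cases hshort : fs.length ≤ α
  · calc fs.length ≤ α * 1 := by omega
      _ ≤ α * (rlz R T).length := Nat.mul_le_mul_left _ (by omega)
  have hα : α ≠ 0 := by rintro rfl; exact hopt 0 (by omega) (by simp)
  have hblock := lpf_lt_length_of_prefix (hfact.flatten_take_prefix α)
    (by simpa using hopt 0 (by omega))
  have hrest := stmt7 R _ α _ (hfact.drop α) (hopt.drop α)
  calc fs.length = α + (fs.drop α).length := by simp only [List.length_drop]; omega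
    _ ≤ α + α * (rlz R (T.drop (fs.take α).flatten.length)).length := by gcongr
    _ = α * ((rlz R (T.drop (fs.take α).flatten.length)).length + 1) := by ring
    _ ≤ α * (rlz R T).length :=
        Nat.mul_le_mul_left _ (length_rlz_drop_lt_of_lpf_lt R hT hblock)
termination_by fs.length
decreasing_by
  simp only [List.length_drop]
  omega
end

section
/- Let T and R be strings with |R| = m ≥ 2, and consider the Δ-core R-factorization of T for a positive integer Δ. Any fragment of T that occurs as a substring of R overlaps at most 8·(log₂ m)² phrases of this factorization; consequently, the Δ-core R-factorization is ⌈8 log₂² m + 2⌉-optimal. -/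
/-- The `Δ`-core `R`-factorization of `T` (phrases listed left to right).
A meta-phrase starting at the current suffix `T` is `T[0..2^{J+1}Δ)` where `J`
is maximal with `T[0..3·2^J·Δ)` occurring in `R` (if some such `J ≥ 0` exists),
and `T[0..min(Δ,|T|))` otherwise.  The length-`Δ` prefix of a meta-phrase is
factorized greedily relative to `R`, and (in the successful case) the rest is
split into phrases of lengths `Δ, 2Δ, 4Δ, …, 2^J·Δ`. -/
def deltaCore (R : List ℕ) (Δ : ℕ) (T : List ℕ) : List (List ℕ) :=
  if hT : T = [] then []
  else if hΔ : Δ = 0 then [T]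
  else if h0 : 3 * Δ ≤ T.length ∧ (T.take (3 * Δ)) <:+: R then
    let J := Nat.findGreatest
      (fun j => 3 * 2 ^ j * Δ ≤ T.length ∧ (T.take (3 * 2 ^ j * Δ)) <:+: R) T.length
    (rlz R (T.take Δ) ++
      (List.range (J + 1)).map (fun h => (T.drop (2 ^ h * Δ)).take (2 ^ h * Δ)))
      ++ deltaCore R Δ (T.drop (2 ^ (J + 1) * Δ))
  else rlz R (T.take Δ) ++ deltaCore R Δ (T.drop Δ)
termination_by T.length
decreasing_by
  · have h1 : T.length ≠ 0 := fun h => hT (List.eq_nil_of_length_eq_zero h)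
    have h2 : 1 ≤ 2 ^ (Nat.findGreatest
      (fun j => 3 * 2 ^ j * Δ ≤ T.length ∧ (T.take (3 * 2 ^ j * Δ)) <:+: R) T.length + 1) * Δ := by
      have := Nat.one_le_two_pow (n := Nat.findGreatest
        (fun j => 3 * 2 ^ j * Δ ≤ T.length ∧ (T.take (3 * 2 ^ j * Δ)) <:+: R) T.length + 1)
      exact Nat.le_mul_of_pos_right _ (Nat.pos_of_ne_zero hΔ) |>.trans' (by omega)
    simp only [List.length_drop]
    omega
  · have h1 : T.length ≠ 0 := fun h => hT (List.eq_nil_of_length_eq_zero h)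
    simp only [List.length_drop]
    omega

/-- Starting position (within `T`) of the `j`-th phrase of a factorization. -/
def startOf (fs : List (List ℕ)) (j : ℕ) : ℕ :=
  ((fs.take j).map List.length).sum

theorem List.take_drop_infix_take_drop {α : Type*} (l : List α) {s s' e' e : ℕ}
    (hs : s ≤ s') (he : e' ≤ e) :
    (l.drop s').take (e' - s') <:+: (l.drop s).take (e - s) := by
  have hsuf : (l.drop s').take (e - s') <:+ (l.drop s).take (e - s) := by
    have : ((l.drop s).take (e - s)).drop (s' - s) = (l.drop s').take (e - s') := by
      rw [List.drop_take, List.drop_drop, show s + (s' - s) = s' by omega,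
        show e - s - (s' - s) = e - s' by omega]
    exact this ▸ List.drop_suffix _ _
  exact (List.take_prefix_take_left (by omega)).isInfix.trans hsuf.isInfix

section OverlapCount

variable {α : Type*}

/-- The number of phrases of `fs` that meet the window `[s, e)` of `fs.flatten`. -/
def overlapCount : List (List α) → ℕ → ℕ → ℕ
  | [], _, _ => 0
  | a :: fs, s, e =>
      (if 0 < e ∧ s < a.length then 1 else 0) + overlapCount fs (s - a.length) (e - a.length)

@[simp]
theorem overlapCount_nil (s e : ℕ) : overlapCount ([] : List (List α)) s e = 0 := rfl

theorem overlapCount_cons (a : List α) (fs : List (List α)) (s e : ℕ) :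
    overlapCount (a :: fs) s e =
      (if 0 < e ∧ s < a.length then 1 else 0) + overlapCount fs (s - a.length) (e - a.length) :=
  rfl

@[simp]
theorem overlapCount_zero_right (fs : List (List α)) (s : ℕ) : overlapCount fs s 0 = 0 := by
  induction fs generalizing s with
  | nil => rfl
  | cons a fs ih => simp [overlapCount_cons, ih]

theorem overlapCount_append (A B : List (List α)) (s e : ℕ) :
    overlapCount (A ++ B) s e =
      overlapCount A s e + overlapCount B (s - A.flatten.length) (e - A.flatten.length) := by
  induction A generalizing s e with
  | nil => simp
  | cons a A ih =>
    simp only [List.cons_append, overlapCount_cons, ih, List.flatten_cons, List.length_append,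
      Nat.sub_sub]
    ring

theorem overlapCount_le_length (fs : List (List α)) (s e : ℕ) :
    overlapCount fs s e ≤ fs.length := by
  induction fs generalizing s e with
  | nil => simp
  | cons a fs ih =>
    have := ih (s - a.length) (e - a.length)
    rw [overlapCount_cons, List.length_cons]
    split <;> omega

theorem overlapCount_eq_zero_of_length_flatten_le {fs : List (List α)} {s : ℕ}
    (h : fs.flatten.length ≤ s) (e : ℕ) : overlapCount fs s e = 0 := by
  induction fs generalizing s e with
  | nil => rfl
  | cons a fs ih =>
    rw [List.flatten_cons, List.length_append] at h
    rw [overlapCount_cons, if_neg (by omega), ih (by omega)]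

end OverlapCount

theorem startOf_eq_length_flatten_take (fs : List (List ℕ)) (j : ℕ) :
    startOf fs j = (fs.take j).flatten.length := by
  rw [startOf, List.length_flatten]

@[simp]
theorem startOf_zero (fs : List (List ℕ)) : startOf fs 0 = 0 := by
  simp [startOf]

theorem startOf_cons_succ (a : List ℕ) (fs : List (List ℕ)) (j : ℕ) :
    startOf (a :: fs) (j + 1) = a.length + startOf fs j := by
  simp [startOf]

theorem startOf_add (fs : List (List ℕ)) (i k : ℕ) :
    startOf fs (i + k) = startOf fs i + ((fs.drop i).take k).flatten.length := by
  simp only [startOf_eq_length_flatten_take, List.take_add, List.flatten_append,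
    List.length_append]

theorem startOf_le_length_flatten (fs : List (List ℕ)) (j : ℕ) :
    startOf fs j ≤ fs.flatten.length := by
  rw [startOf_eq_length_flatten_take]
  exact ((List.take_prefix j fs).flatten).length_le

theorem take_drop_flatten_startOf (fs : List (List ℕ)) (i k : ℕ) :
    (fs.flatten.drop (startOf fs i)).take (startOf fs (i + k) - startOf fs i) =
      ((fs.drop i).take k).flatten := by
  have hsplit : fs.flatten =
      (fs.take i).flatten ++ (((fs.drop i).take k).flatten ++ ((fs.drop i).drop k).flatten) := by
    simp only [← List.flatten_append, List.take_append_drop]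
  rw [startOf_add, Nat.add_sub_cancel_left, startOf_eq_length_flatten_take, hsplit,
    List.drop_left, List.take_left]

theorem le_overlapCount_startOf {fs : List (List ℕ)} (hne : ∀ ph ∈ fs, ph ≠ []) {i k : ℕ}
    (h : i + k ≤ fs.length) : k ≤ overlapCount fs (startOf fs i) (startOf fs (i + k)) := by
  induction fs generalizing i k with
  | nil =>
    rw [List.length_nil] at h
    rw [overlapCount_nil]
    omega
  | cons a fs ih =>
    have ha : 0 < a.length := List.length_pos_iff.2 (hne a List.mem_cons_self)
    have ih' := @ih (fun ph hph => hne ph (List.mem_cons_of_mem _ hph))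
    rw [List.length_cons] at h
    cases i with
    | zero =>
      cases k with
      | zero => simp
      | succ k =>
        have := ih' (i := 0) (k := k) (by omega)
        rw [Nat.zero_add, startOf_zero] at this ⊢
        rw [startOf_cons_succ, overlapCount_cons, if_pos ⟨by omega, ha⟩, Nat.zero_sub,
          Nat.add_sub_cancel_left]
        omega
    | succ i =>
      rw [Nat.add_right_comm, startOf_cons_succ, startOf_cons_succ, overlapCount_cons,
        Nat.add_sub_cancel_left, Nat.add_sub_cancel_left]
      exact (ih' (by omega)).trans (Nat.le_add_left _ _)

theorem card_filter_overlaps_eq_overlapCount {fs : List (List ℕ)} (hne : ∀ ph ∈ fs, ph ≠ [])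
    (s e : ℕ) :
    ((Finset.range fs.length).filter (fun j =>
      startOf fs j < e ∧ s < startOf fs j + (fs.getD j []).length)).card = overlapCount fs s e := by
  induction fs generalizing s e with
  | nil => simp
  | cons a fs ih =>
    have hshift : ∀ j ∈ Finset.range fs.length,
        (if startOf (a :: fs) (j + 1) < e ∧
            s < startOf (a :: fs) (j + 1) + ((a :: fs).getD (j + 1) []).length then 1 else 0) =
          (if startOf fs j < e - a.length ∧
            s - a.length < startOf fs j + (fs.getD j []).length then 1 else 0) := by
      intro j hj
      have hj' : fs.getD j [] ∈ fs := by
        rw [List.getD_eq_getElem _ _ (Finset.mem_range.1 hj)]; exact List.getElem_mem _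
      have hpos := List.length_pos_iff.2 (hne _ (List.mem_cons_of_mem _ hj'))
      rw [startOf_cons_succ, List.getD_cons_succ]
      exact if_congr (by omega) rfl rfl
    rw [Finset.card_filter, List.length_cons, Finset.sum_range_succ', Finset.sum_congr rfl hshift,
      ← Finset.card_filter, ih (fun ph hph => hne ph (List.mem_cons_of_mem _ hph)),
      overlapCount_cons]
    simp only [startOf_zero, List.getD_cons_zero, Nat.zero_add]
    omega

section GreedyFactorization

variable (R : List ℕ)

theorem min_le_lpf {T : List ℕ} {e : ℕ} (h : T.take e <:+: R) : min e T.length ≤ lpf R T := by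
  refine Nat.le_findGreatest (min_le_right _ _) ?_
  rwa [← List.take_take, List.take_length]

/-- A letter that does not occur in `R` becomes a one-letter phrase. -/
theorem rlz_eq_cons {T : List ℕ} (hT : T ≠ []) :
    rlz R T = T.take (max (lpf R T) 1) :: rlz R (T.drop (max (lpf R T) 1)) := by
  rw [rlz, dif_neg hT]
  split_ifs with h0
  · obtain ⟨a, t, rfl⟩ := List.exists_cons_of_ne_nil hT
    simp [h0]
  · rw [max_eq_left (by omega)]

theorem max_lpf_one_le_length {T : List ℕ} (hT : T ≠ []) : max (lpf R T) 1 ≤ T.length :=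
  max_le (Nat.findGreatest_le _) (List.length_pos_iff.2 hT)

theorem flatten_rlz (T : List ℕ) : (rlz R T).flatten = T := by
  rcases eq_or_ne T [] with rfl | hT
  · simp [rlz]
  rw [rlz_eq_cons R hT, List.flatten_cons, flatten_rlz, List.take_append_drop]
termination_by T.length
decreasing_by
  have := le_max_right (lpf R T) 1
  have := List.length_pos_iff.2 hT
  simp only [List.length_drop]
  omega

theorem ne_nil_of_mem_rlz (T : List ℕ) : ∀ ph ∈ rlz R T, ph ≠ [] := by
  rcases eq_or_ne T [] with rfl | hT
  · simp [rlz]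
  rw [rlz_eq_cons R hT]
  rintro ph (_ | ⟨_, hph⟩)
  · have := max_lpf_one_le_length R hT
    have := le_max_right (lpf R T) 1
    rw [← List.length_pos_iff, List.length_take]
    omega
  · exact ne_nil_of_mem_rlz _ ph hph
termination_by T.length
decreasing_by
  have := le_max_right (lpf R T) 1
  have := List.length_pos_iff.2 hT
  simp only [List.length_drop]
  omega

/-- By greediness, a prefix of `T` occurring in `R` lies within the first phrase. -/
theorem overlapCount_rlz_zero_le_one {T : List ℕ} {e : ℕ} (h : T.take e <:+: R) :
    overlapCount (rlz R T) 0 e ≤ 1 := by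
  rcases eq_or_ne T [] with rfl | hT
  · simp [rlz]
  have hp := max_lpf_one_le_length R hT
  have hle : min e T.length ≤ max (lpf R T) 1 := (min_le_lpf R h).trans (le_max_left _ _)
  rw [rlz_eq_cons R hT, overlapCount_cons, List.length_take_of_le hp]
  generalize max (lpf R T) 1 = p at *
  have hrest : overlapCount (rlz R (T.drop p)) (0 - p) (e - p) = 0 := by
    rcases le_or_gt e p with hep | hpe
    · rw [Nat.sub_eq_zero_of_le hep, overlapCount_zero_right]
    · rw [List.drop_of_length_le (by omega), rlz, dif_pos rfl, overlapCount_nil]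
  rw [hrest]
  split <;> omega

theorem overlapCount_rlz_le_two (T : List ℕ) {s e : ℕ} (h : (T.drop s).take (e - s) <:+: R) :
    overlapCount (rlz R T) s e ≤ 2 := by
  rcases eq_or_ne T [] with rfl | hT
  · simp [rlz]
  have hp := max_lpf_one_le_length R hT
  have hp1 := le_max_right (lpf R T) 1
  rw [rlz_eq_cons R hT, overlapCount_cons, List.length_take_of_le hp]
  generalize max (lpf R T) 1 = p at *
  rcases lt_or_ge s p with hsp | hps
  · have hfrag : (T.drop p).take (e - p) <:+: R :=
      (T.take_drop_infix_take_drop hsp.le le_rfl).trans h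
    have := overlapCount_rlz_zero_le_one R hfrag
    rw [Nat.sub_eq_zero_of_le hsp.le]
    split <;> omega
  · have hfrag : ((T.drop p).drop (s - p)).take (e - p - (s - p)) <:+: R := by
      rwa [List.drop_drop, Nat.add_sub_cancel' hps, Nat.sub_sub_sub_cancel_right hps]
    rw [if_neg (by omega), Nat.zero_add]
    exact overlapCount_rlz_le_two (T.drop p) hfrag
termination_by T.length
decreasing_by
  have := le_max_right (lpf R T) 1
  have := List.length_pos_iff.2 hT
  simp only [List.length_drop]
  omega

end GreedyFactorization

section DeltaCore

variable (R : List ℕ) (Δ : ℕ)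

/-- The exponent `J` of a meta-phrase starting at the beginning of `T`. -/
def metaExponent (T : List ℕ) : ℕ :=
  Nat.findGreatest (fun j => 3 * 2 ^ j * Δ ≤ T.length ∧ (T.take (3 * 2 ^ j * Δ)) <:+: R) T.length

def dyadicPhrases (T : List ℕ) (J : ℕ) : List (List ℕ) :=
  (List.range (J + 1)).map (fun h => (T.drop (2 ^ h * Δ)).take (2 ^ h * Δ))

@[simp]
theorem length_dyadicPhrases (T : List ℕ) (J : ℕ) : (dyadicPhrases Δ T J).length = J + 1 := by
  simp [dyadicPhrases]

def metaPhrases (T : List ℕ) : List (List ℕ) :=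
  if 3 * Δ ≤ T.length ∧ T.take (3 * Δ) <:+: R then
    rlz R (T.take Δ) ++ dyadicPhrases Δ T (metaExponent R Δ T)
  else rlz R (T.take Δ)

def metaLength (T : List ℕ) : ℕ :=
  if 3 * Δ ≤ T.length ∧ T.take (3 * Δ) <:+: R then 2 ^ (metaExponent R Δ T + 1) * Δ else Δ

variable {R Δ}

theorem deltaCore_eq_metaPhrases_append {T : List ℕ} (hT : T ≠ []) (hΔ : Δ ≠ 0) :
    deltaCore R Δ T = metaPhrases R Δ T ++ deltaCore R Δ (T.drop (metaLength R Δ T)) := by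
  rw [deltaCore, dif_neg hT, dif_neg hΔ, metaPhrases, metaLength]
  split_ifs <;> rfl

theorem metaLength_pos (hΔ : Δ ≠ 0) (T : List ℕ) : 0 < metaLength R Δ T := by
  unfold metaLength
  split_ifs <;> positivity

theorem metaExponent_spec {T : List ℕ} (h : 3 * Δ ≤ T.length ∧ T.take (3 * Δ) <:+: R) :
    3 * 2 ^ metaExponent R Δ T * Δ ≤ T.length ∧
      T.take (3 * 2 ^ metaExponent R Δ T * Δ) <:+: R :=
  Nat.findGreatest_spec (P := fun j => 3 * 2 ^ j * Δ ≤ T.length ∧ _) (Nat.zero_le _)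
    (by simpa using h)

theorem take_append_flatten_dyadicPhrases (T : List ℕ) (J : ℕ) :
    T.take Δ ++ (dyadicPhrases Δ T J).flatten = T.take (2 ^ (J + 1) * Δ) := by
  induction J with
  | zero => simp [dyadicPhrases, two_mul, List.take_add]
  | succ J ih =>
    rw [dyadicPhrases, List.range_succ, List.map_append, List.flatten_append, ← dyadicPhrases,
      ← List.append_assoc, ih, pow_succ 2 (J + 1), mul_two, add_mul, List.take_add]
    simp

theorem flatten_metaPhrases (T : List ℕ) :
    (metaPhrases R Δ T).flatten = T.take (metaLength R Δ T) := by
  unfold metaPhrases metaLength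
  split_ifs
  · rw [List.flatten_append, flatten_rlz, take_append_flatten_dyadicPhrases]
  · rw [flatten_rlz]

theorem flatten_deltaCore (hΔ : Δ ≠ 0) (T : List ℕ) : (deltaCore R Δ T).flatten = T := by
  rcases eq_or_ne T [] with rfl | hT
  · simp [deltaCore]
  rw [deltaCore_eq_metaPhrases_append hT hΔ, List.flatten_append, flatten_metaPhrases,
    flatten_deltaCore hΔ, List.take_append_drop]
termination_by T.length
decreasing_by
  have := metaLength_pos (R := R) hΔ T
  have := List.length_pos_iff.2 hT
  simp only [List.length_drop]
  omega

theorem ne_nil_of_mem_metaPhrases (hΔ : Δ ≠ 0) (T : List ℕ) :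
    ∀ ph ∈ metaPhrases R Δ T, ph ≠ [] := by
  unfold metaPhrases
  split_ifs with h
  · have hJ := (metaExponent_spec h).1
    rintro ph hph
    rcases List.mem_append.1 hph with hph | hph
    · exact ne_nil_of_mem_rlz R _ ph hph
    obtain ⟨i, hi, rfl⟩ := List.mem_map.1 hph
    have hiJ : 2 ^ i ≤ 2 ^ metaExponent R Δ T :=
      Nat.pow_le_pow_right two_pos (Nat.lt_succ_iff.1 (List.mem_range.1 hi))
    have hpos : 0 < 2 ^ i * Δ := by positivity
    have : 2 ^ i * Δ ≤ 2 ^ metaExponent R Δ T * Δ := Nat.mul_le_mul_right _ hiJ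
    rw [← List.length_pos_iff, List.length_take, List.length_drop]
    rw [mul_assoc] at hJ
    omega
  · exact ne_nil_of_mem_rlz R _

theorem ne_nil_of_mem_deltaCore (hΔ : Δ ≠ 0) (T : List ℕ) : ∀ ph ∈ deltaCore R Δ T, ph ≠ [] := by
  rcases eq_or_ne T [] with rfl | hT
  · simp [deltaCore]
  rw [deltaCore_eq_metaPhrases_append hT hΔ]
  intro ph hph
  rcases List.mem_append.1 hph with hph | hph
  · exact ne_nil_of_mem_metaPhrases hΔ T ph hph
  · exact ne_nil_of_mem_deltaCore hΔ _ ph hph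
termination_by T.length
decreasing_by
  have := metaLength_pos (R := R) hΔ T
  have := List.length_pos_iff.2 hT
  simp only [List.length_drop]
  omega

end DeltaCore

section MetaPhraseBounds

variable {R : List ℕ} {Δ : ℕ}

/-- By maximality of `J`. -/
theorem lt_three_mul_metaLength (hΔ : Δ ≠ 0) {T : List ℕ} {e : ℕ} (he : e ≤ T.length)
    (h : T.take e <:+: R) (hlt : metaLength R Δ T < e) : e < 3 * metaLength R Δ T := by
  unfold metaLength at hlt ⊢
  by_contra! hle
  split_ifs at hlt hle with h0
  · set J := metaExponent R Δ T
    have hJ : J + 1 ≤ T.length := by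
      have := Nat.lt_two_pow_self (n := J + 1)
      have := Nat.le_mul_of_pos_right (2 ^ (J + 1)) (Nat.pos_of_ne_zero hΔ)
      omega
    have hmax : J + 1 ≤ J := Nat.le_findGreatest
      (P := fun j => 3 * 2 ^ j * Δ ≤ T.length ∧ T.take (3 * 2 ^ j * Δ) <:+: R) hJ
      ⟨by rw [mul_assoc]; omega,
        (List.take_prefix_take_left (by rw [mul_assoc]; exact hle)).isInfix.trans h⟩
    exact Nat.not_succ_le_self J hmax
  · exact h0 ⟨by omega, (List.take_prefix_take_left hle).isInfix.trans h⟩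

theorem succ_metaExponent_le_log (hΔ : Δ ≠ 0) {T : List ℕ}
    (h : 3 * Δ ≤ T.length ∧ T.take (3 * Δ) <:+: R) :
    metaExponent R Δ T + 1 ≤ Nat.log 2 (2 * R.length / 3) := by
  obtain ⟨hle, hR⟩ := metaExponent_spec h
  have hlen := hR.length_le
  rw [List.length_take_of_le hle] at hlen
  have : 3 * 2 ^ metaExponent R Δ T ≤ R.length :=
    (Nat.le_mul_of_pos_right _ (Nat.pos_of_ne_zero hΔ)).trans hlen
  refine Nat.le_log_of_pow_le one_lt_two ((Nat.le_div_iff_mul_le three_pos).2 ?_)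
  rw [pow_succ]
  omega

/-- At most two greedy phrases of the head, plus the `J + 1 ≤ log₂ (2m/3)` dyadic phrases. -/
theorem overlapCount_metaPhrases_le (hΔ : Δ ≠ 0) {T : List ℕ} {s e : ℕ}
    (h : (T.drop s).take (e - s) <:+: R) :
    overlapCount (metaPhrases R Δ T) s e ≤ Nat.log 2 (2 * R.length / 3) + 2 := by
  have hrlz : overlapCount (rlz R (T.take Δ)) s e ≤ 2 := by
    refine overlapCount_rlz_le_two R _ (List.IsInfix.trans ?_ h)
    rw [List.drop_take, List.take_take]
    exact (List.take_prefix_take_left (min_le_left _ _)).isInfix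
  unfold metaPhrases
  split_ifs with h0
  · have hdyad := overlapCount_le_length (dyadicPhrases Δ T (metaExponent R Δ T))
      (s - (rlz R (T.take Δ)).flatten.length) (e - (rlz R (T.take Δ)).flatten.length)
    rw [length_dyadicPhrases] at hdyad
    have := succ_metaExponent_le_log hΔ h0
    rw [overlapCount_append]
    omega
  · omega

theorem overlapCount_deltaCore_eq (hΔ : Δ ≠ 0) {T : List ℕ} (hT : T ≠ []) {s e : ℕ}
    (hs : s ≤ T.length) (he : e ≤ T.length) :
    overlapCount (deltaCore R Δ T) s e = overlapCount (metaPhrases R Δ T) s e +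
      overlapCount (deltaCore R Δ (T.drop (metaLength R Δ T)))
        (s - metaLength R Δ T) (e - metaLength R Δ T) := by
  rw [deltaCore_eq_metaPhrases_append hT hΔ, overlapCount_append, flatten_metaPhrases,
    List.length_take]
  have hmin : ∀ x ≤ T.length, x - min (metaLength R Δ T) T.length = x - metaLength R Δ T := by
    intro x hx
    omega
  rw [hmin s hs, hmin e he]

end MetaPhraseBounds

theorem mul_two_pow_lt_three_pow_of_three_mul_lt {a e k : ℕ} (ha : 3 * a < 2 * e)
    (he : e * 2 ^ (k + 1) < 3 ^ (k + 1)) : a * 2 ^ k < 3 ^ k := by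
  rw [pow_succ, pow_succ] at he
  nlinarith [Nat.two_pow_pos k]

section FragmentBound

variable {R : List ℕ} {Δ : ℕ}

/-- A prefix of `T` that occurs in `R` loses more than a third of its length with each meta-phrase
it covers, so it meets at most `k` meta-phrases when `e < (3/2)^k`. -/
theorem overlapCount_deltaCore_zero_le (hΔ : Δ ≠ 0) (T : List ℕ) {e k : ℕ} (he : e ≤ T.length)
    (h : T.take e <:+: R) (hk : e * 2 ^ k < 3 ^ k) :
    overlapCount (deltaCore R Δ T) 0 e ≤ (Nat.log 2 (2 * R.length / 3) + 2) * k := by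
  rcases eq_or_ne T [] with rfl | hT
  · simp [deltaCore]
  cases k with
  | zero =>
    obtain rfl : e = 0 := by simpa using hk
    simp
  | succ k =>
    have hblock := overlapCount_metaPhrases_le hΔ (T := T) (s := 0) (by simpa using h)
    rw [overlapCount_deltaCore_eq hΔ hT (Nat.zero_le _) he, Nat.zero_sub, mul_add_one]
    rcases le_or_gt e (metaLength R Δ T) with hle | hlt
    · rw [Nat.sub_eq_zero_of_le hle, overlapCount_zero_right]
      exact Nat.add_le_add_left hblock _ |>.trans' (by omega)
    · have h3 := lt_three_mul_metaLength hΔ he h hlt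
      have hrest := overlapCount_deltaCore_zero_le hΔ (T.drop (metaLength R Δ T))
        (e := e - metaLength R Δ T) (k := k) (by simp only [List.length_drop]; omega)
        ((T.take_drop_infix_take_drop (Nat.zero_le _) le_rfl).trans (by simpa using h))
        (mul_two_pow_lt_three_pow_of_three_mul_lt (by omega) hk)
      omega
termination_by T.length
decreasing_by
  have := metaLength_pos (R := R) hΔ T
  have := List.length_pos_iff.2 hT
  simp only [List.length_drop]
  omega

/-- Past the meta-phrase containing its start, a fragment is a prefix of the remaining text. -/
theorem overlapCount_deltaCore_le (hΔ : Δ ≠ 0) (T : List ℕ) {s e k : ℕ} (hse : s ≤ e)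
    (he : e ≤ T.length) (h : (T.drop s).take (e - s) <:+: R) (hk : (e - s) * 2 ^ k < 3 ^ k) :
    overlapCount (deltaCore R Δ T) s e ≤ (Nat.log 2 (2 * R.length / 3) + 2) * (k + 1) := by
  rcases eq_or_ne T [] with rfl | hT
  · simp [deltaCore]
  rw [overlapCount_deltaCore_eq hΔ hT (hse.trans he) he]
  set off := metaLength R Δ T
  rcases le_or_gt off s with hos | hso
  · rw [overlapCount_eq_zero_of_length_flatten_le (by
      rw [flatten_metaPhrases, List.length_take]; omega), Nat.zero_add]
    refine overlapCount_deltaCore_le hΔ (T.drop off) (by omega)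
      (by simp only [List.length_drop]; omega) ?_ (by rwa [Nat.sub_sub_sub_cancel_right hos])
    rwa [List.drop_drop, Nat.add_sub_cancel' hos, Nat.sub_sub_sub_cancel_right hos]
  · have hblock := overlapCount_metaPhrases_le hΔ h
    have hrest := overlapCount_deltaCore_zero_le hΔ (T.drop off) (e := e - off) (k := k)
      (by simp only [List.length_drop]; omega)
      ((T.take_drop_infix_take_drop hso.le le_rfl).trans h)
      ((Nat.mul_le_mul_right _ (by omega)).trans_lt hk)
    rw [Nat.sub_eq_zero_of_le hso.le, mul_add_one]
    omega
termination_by T.length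
decreasing_by
  have := metaLength_pos (R := R) hΔ T
  have := List.length_pos_iff.2 hT
  simp only [List.length_drop]
  omega

end FragmentBound

theorem three_halves_le_logb_two {m : ℕ} (hm : 3 ≤ m) : 3 / 2 ≤ Real.logb 2 m := by
  have h8 : Real.logb 2 8 = 3 := by
    rw [show (8 : ℝ) = 2 ^ 3 by norm_num, Real.logb_pow, Real.logb_self_eq_one one_lt_two]
    norm_num
  have h : Real.logb 2 8 ≤ Real.logb 2 ((m : ℝ) ^ 2) :=
    Real.logb_le_logb_of_le one_lt_two (by norm_num) (by
      have : (3 : ℝ) ≤ m := by exact_mod_cast hm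
      nlinarith)
  rw [h8, Real.logb_pow] at h
  push_cast at h
  linarith

theorem exists_mul_two_pow_lt_three_pow_and_le {m : ℕ} (hm : 2 ≤ m) :
    ∃ k, m * 2 ^ k < 3 ^ k ∧
      (((Nat.log 2 (2 * m / 3) + 2) * (k + 1) : ℕ) : ℝ) ≤ 8 * Real.logb 2 m ^ 2 := by
  rcases hm.eq_or_lt with rfl | hm3
  · refine ⟨2, by norm_num, ?_⟩
    norm_num [Real.logb_self_eq_one]
  set D := Nat.log 2 m
  refine ⟨2 * D + 2, ?_, ?_⟩
  · have hm_lt : m < 2 ^ (D + 1) := Nat.lt_pow_succ_log_self one_lt_two m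
    calc m * 2 ^ (2 * D + 2) < 2 ^ (D + 1) * 2 ^ (2 * D + 2) :=
          Nat.mul_lt_mul_of_pos_right hm_lt (by positivity)
      _ = 8 ^ (D + 1) := by rw [← pow_add, show (8 : ℕ) = 2 ^ 3 by rfl, ← pow_mul]; ring_nf
      _ ≤ 9 ^ (D + 1) := Nat.pow_le_pow_left (by norm_num) _
      _ = 3 ^ (2 * D + 2) := by rw [show (9 : ℕ) = 3 ^ 2 by rfl, ← pow_mul]; ring_nf
  · have hlog : Nat.log 2 (2 * m / 3) ≤ D := Nat.log_mono_right (by omega)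
    have hx : (D : ℝ) ≤ Real.logb 2 m := by exact_mod_cast Real.natLog_le_logb m 2
    have hx3 := three_halves_le_logb_two (m := m) hm3
    calc (((Nat.log 2 (2 * m / 3) + 2) * (2 * D + 2 + 1) : ℕ) : ℝ)
        ≤ (((D + 2) * (2 * D + 3) : ℕ) : ℝ) := by exact_mod_cast Nat.mul_le_mul (by omega) le_rfl
      _ = (D + 2) * (2 * D + 3) := by push_cast; ring
      _ ≤ 8 * Real.logb 2 m ^ 2 := by
          rcases Nat.lt_or_ge D 2 with hD2 | hD2
          · have : (D : ℝ) ≤ 1 := by exact_mod_cast Nat.lt_succ_iff.1 hD2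
            nlinarith
          · have : (2 : ℝ) ≤ D := by exact_mod_cast hD2
            nlinarith

theorem alphaOptimal_of_overlapCount_lt {R T : List ℕ} {fs : List (List ℕ)} {α : ℕ}
    (hfs : fs.flatten = T) (hne : ∀ ph ∈ fs, ph ≠ [])
    (h : ∀ s e, s ≤ e → e ≤ T.length → (T.drop s).take (e - s) <:+: R → overlapCount fs s e < α) :
    AlphaOptimal R α fs := by
  subst hfs
  intro i hi hR
  have hs : startOf fs i ≤ startOf fs (i + α) := by rw [startOf_add]; omega
  refine (h _ _ hs (startOf_le_length_flatten fs _) ?_).not_ge (le_overlapCount_startOf hne hi)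
  rwa [take_drop_flatten_startOf]

theorem overlapCount_deltaCore_le_eight_mul_logb_sq {R : List ℕ} {Δ : ℕ} (hΔ : Δ ≠ 0)
    (hm : 2 ≤ R.length) {T : List ℕ} {s e : ℕ} (hse : s ≤ e) (he : e ≤ T.length)
    (h : (T.drop s).take (e - s) <:+: R) :
    (overlapCount (deltaCore R Δ T) s e : ℝ) ≤ 8 * Real.logb 2 R.length ^ 2 := by
  obtain ⟨k, hk, hle⟩ := exists_mul_two_pow_lt_three_pow_and_le hm
  have hlen : e - s ≤ R.length := by
    have := h.length_le
    rw [List.length_take, List.length_drop] at this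
    omega
  exact (Nat.cast_le.2 (overlapCount_deltaCore_le hΔ T hse he h
    ((Nat.mul_le_mul_right _ hlen).trans_lt hk))).trans hle

/-- For `|R| = m ≥ 2`, every fragment `T[s..e)` of `T` that occurs in `R`
overlaps at most `8·(log₂ m)²` phrases of the `Δ`-core `R`-factorization of
`T`; consequently, this factorization is `⌈8·log₂²m + 2⌉`-optimal. -/
theorem stmt8 (R T : List ℕ) (Δ : ℕ) (hΔ : 1 ≤ Δ) (hm : 2 ≤ R.length) :
    (∀ s e : ℕ, s ≤ e → e ≤ T.length → ((T.drop s).take (e - s)) <:+: R →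
      (((Finset.range (deltaCore R Δ T).length).filter (fun j =>
          startOf (deltaCore R Δ T) j < e ∧
          s < startOf (deltaCore R Δ T) j + ((deltaCore R Δ T).getD j []).length)).card : ℝ)
        ≤ 8 * (Real.logb 2 R.length) ^ 2) ∧
    AlphaOptimal R (⌈8 * (Real.logb 2 R.length) ^ 2 + 2⌉₊) (deltaCore R Δ T) := by
  have hΔ0 : Δ ≠ 0 := by omega
  have hne := ne_nil_of_mem_deltaCore (R := R) hΔ0 T
  refine ⟨fun s e hse he h => ?_, alphaOptimal_of_overlapCount_lt (flatten_deltaCore hΔ0 T) hne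
    fun s e hse he h => ?_⟩
  · rw [card_filter_overlaps_eq_overlapCount hne]
    exact overlapCount_deltaCore_le_eight_mul_logb_sq hΔ0 hm hse he h
  · have hceil := Nat.le_ceil (8 * Real.logb 2 (R.length : ℝ) ^ 2 + 2)
    exact_mod_cast (overlapCount_deltaCore_le_eight_mul_logb_sq hΔ0 hm hse he h).trans_lt
      (by linarith : 8 * Real.logb 2 R.length ^ 2 < (⌈8 * Real.logb 2 R.length ^ 2 + 2⌉₊ : ℝ))
end

section
/- In the Δ-core R-factorization, consider a meta-phrase T[s..e) fully contained in a fragment T[s'..e') that occurs in R, and suppose e' − s ≥ 3Δ. Then e − s ≥ (e' − s)/3; that is, the meta-phrase covers at least one third of the part of the fragment to its right. -/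
/-! Let `N = e' − s` and choose `m` with `3Δ·2^m ≤ N < 3Δ·2^(m+1)`. The prefix of length
`3·2^m·Δ` of `T[s..)` is a prefix of `T[s..e')`, hence also occurs in `R`, so the maximal
index `J` satisfies `m ≤ J` and `N < 3·2^(m+1)·Δ ≤ 3·2^(J+1)·Δ`. -/

theorem Nat.exists_mul_two_pow_le_lt {c N : ℕ} (hc : 0 < c) (hcN : c ≤ N) :
    ∃ m, c * 2 ^ m ≤ N ∧ N < c * 2 ^ (m + 1) := by
  have hq : N / c ≠ 0 := (Nat.div_pos hcN hc).ne'
  refine ⟨Nat.log 2 (N / c), ?_, ?_⟩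
  · calc c * 2 ^ Nat.log 2 (N / c) ≤ c * (N / c) := by gcongr; exact Nat.pow_log_le_self 2 hq
      _ ≤ N := Nat.mul_div_le N c
  · calc N < c * (N / c + 1) := by rw [mul_add_one, mul_comm]; exact Nat.lt_div_mul_add hc
      _ ≤ c * 2 ^ (Nat.log 2 (N / c) + 1) := by
        gcongr; exact Nat.lt_pow_succ_log_self one_lt_two _

theorem List.take_infix_of_take_infix {α : Type*} {L R : List α} {k n : ℕ} (hkn : k ≤ n)
    (h : L.take n <:+: R) : L.take k <:+: R :=
  (List.take_prefix_take_left (l := L) hkn).isInfix.trans h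

/-- In the `Δ`-core factorization, a meta-phrase starting at position `s` and
fully contained in a fragment `T[s..e')` that occurs in `R` with
`e' − s ≥ 3Δ` has length `2^{J+1}·Δ ≥ (e'−s)/3`, where `J` is the maximal `j`
such that `T[s..s+3·2^j·Δ)` occurs in `R`. -/
theorem stmt9 (T R : List ℕ) (Δ s e' : ℕ) (hΔ : 1 ≤ Δ)
    (he' : e' ≤ T.length) (hlen : s + 3 * Δ ≤ e')
    (hocc : ((T.drop s).take (e' - s)) <:+: R) :
    e' - s ≤ 3 * (2 ^ (Nat.findGreatest
      (fun j => 3 * 2 ^ j * Δ ≤ (T.drop s).length ∧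
        ((T.drop s).take (3 * 2 ^ j * Δ)) <:+: R) (T.drop s).length + 1) * Δ) := by
  obtain ⟨m, hm_le, hm_lt⟩ :=
    Nat.exists_mul_two_pow_le_lt (c := 3 * Δ) (N := e' - s) (by omega) (by omega)
  have hN : e' - s ≤ (T.drop s).length := by rw [List.length_drop]; omega
  have hm : 3 * 2 ^ m * Δ ≤ e' - s := by linarith
  have hmJ : m ≤ Nat.findGreatest
      (fun j => 3 * 2 ^ j * Δ ≤ (T.drop s).length ∧
        ((T.drop s).take (3 * 2 ^ j * Δ)) <:+: R) (T.drop s).length := by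
    refine Nat.le_findGreatest ?_ ⟨hm.trans hN, List.take_infix_of_take_infix hm hocc⟩
    have := Nat.lt_two_pow_self (n := m)
    nlinarith
  calc e' - s ≤ 3 * Δ * 2 ^ (m + 1) := hm_lt.le
    _ ≤ 3 * Δ * 2 ^ (Nat.findGreatest _ (T.drop s).length + 1) := by gcongr; omega
    _ = _ := by ring
end

section
/- Let r ≤ γn/1000 and suppose a computation path produces exactly ⌊γn/r⌋ edge-disjoint pieces each containing exactly r correct outputs (discarding a final shorter piece). Then the number of pieces exceeds (999/1000)·γn/r, and if the total path length is T and total number of outputs is at most βn, then there exists a piece of length at most ⌈n/20⌉ that produces at least r correct outputs and at most ⌊(22/21)·rβ/γ⌋ outputs overall, provided r ≤ γn²/(20000·T). -/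
/-!
Drop the leftover: the pieces then have total length at most `T` and produce at most `b`
outputs. By Markov's inequality at most `g / (1000 r)` pieces are longer than `⌈n/20⌉`, and at
most `(21/22) g / r` pieces produce more than `(22/21) r b / g` outputs. As there are more than
`(999/1000) g / r` pieces and `1/1000 + 21/22 < 999/1000`, some piece is neither.
-/

namespace List

variable {α : Type*}

theorem length_filter_mul_le_sum_map (l : List α) (f : α → ℕ) (c : ℕ) :
    (l.filter fun x => c ≤ f x).length * c ≤ (l.map f).sum := by
  induction l with
  | nil => simp
  | cons x l ih =>
    by_cases hx : c ≤ f x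
    · simp only [filter_cons, hx, decide_true, if_true, length_cons, map_cons, sum_cons]
      nlinarith
    · simp only [filter_cons, hx, decide_false, Bool.false_eq_true, if_false, map_cons, sum_cons]
      omega

theorem length_le_length_filter_add_length_filter (l : List α) {p q : α → Bool}
    (h : ∀ x ∈ l, p x ∨ q x) :
    l.length ≤ (l.filter p).length + (l.filter q).length := by
  induction l with
  | nil => simp
  | cons x l ih =>
    have hl := ih fun y hy => h y (mem_cons_of_mem x hy)
    rcases h x mem_cons_self with hx | hx <;>
      by_cases hp : p x <;> by_cases hq : q x <;> simp_all <;> omega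

theorem sum_map_sum_map_le_sum_map_flatten_append (ps : List (List α)) (rest : List α)
    (f : α → ℕ) :
    (ps.map fun P => (P.map f).sum).sum ≤ ((ps.flatten ++ rest).map f).sum := by
  simp [map_flatten, sum_flatten, Function.comp_def]

theorem sum_map_length_le_length_flatten_append (ps : List (List α)) (rest : List α) :
    (ps.map length).sum ≤ (ps.flatten ++ rest).length := by
  simp [length_flatten]

end List

namespace DensePiece

theorem many_pieces {g r : ℕ} (hr : 0 < r) (hrg : 1000 * r ≤ g) :
    999 * g < 1000 * (g / r) * r := by
  have := Nat.lt_div_mul_add (a := g) hr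
  nlinarith

theorem few_long_pieces {n g T r L : ℕ} (hrT : 20000 * r * T ≤ g * n)
    (hL : L * ((n + 19) / 20 + 1) ≤ T) :
    1000 * r * L ≤ g := by
  have hn : n ≤ 20 * ((n + 19) / 20 + 1) := by omega
  set m := (n + 19) / 20 + 1
  refine Nat.le_of_mul_le_mul_right (c := 20 * m) ?_ (by omega)
  calc 1000 * r * L * (20 * m) = 20000 * r * (L * m) := by ring
    _ ≤ 20000 * r * T := Nat.mul_le_mul_left _ hL
    _ ≤ g * n := hrT
    _ ≤ g * (20 * m) := Nat.mul_le_mul_left _ hn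

theorem few_dense_pieces {g b r H : ℕ} (hH : H * (22 * r * b + 1) ≤ 21 * g * b) :
    22 * r * H ≤ 21 * g := by
  by_contra! h
  nlinarith [Nat.mul_le_mul_right b h]

end DensePiece

/-- An edge is recorded as (number of outputs, number of correct outputs); `g` stands for `γn`
and `b` for `βn`. -/
theorem stmt16_general (n g b T r : ℕ) (hr : 0 < r)
    (hrg : 1000 * r ≤ g)
    (path rest : List (ℕ × ℕ)) (ps : List (List (ℕ × ℕ)))
    (hpath : path = ps.flatten ++ rest)
    (hpieces : ∀ P ∈ ps, (P.map Prod.snd).sum = r)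
    (hnum : ps.length = g / r)
    (hT : path.length ≤ T)
    (hout : (path.map Prod.fst).sum ≤ b)
    (hrT : 20000 * r * T ≤ g * n) :
    999 * g < 1000 * ps.length * r ∧
    ∃ P ∈ ps, P.length ≤ (n + 19) / 20 ∧ r ≤ (P.map Prod.snd).sum ∧
      21 * g * (P.map Prod.fst).sum ≤ 22 * r * b := by
  have hmany : 999 * g < 1000 * ps.length * r := hnum ▸ DensePiece.many_pieces hr hrg
  refine ⟨hmany, ?_⟩
  by_contra! hshort_dense
  set c := (n + 19) / 20
  have hlong := ps.length_filter_mul_le_sum_map List.length (c + 1)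
  have hdense := ps.length_filter_mul_le_sum_map
    (fun P => 21 * g * (P.map Prod.fst).sum) (22 * r * b + 1)
  have hcover := ps.length_le_length_filter_add_length_filter
    (p := fun P => c + 1 ≤ P.length) (q := fun P => 22 * r * b + 1 ≤ 21 * g * (P.map Prod.fst).sum)
    fun P hP => by
      by_cases hP' : P.length ≤ c
      · exact Or.inr (decide_eq_true (hshort_dense P hP hP' (hpieces P hP).ge))
      · exact Or.inl (decide_eq_true (by omega))
  have hlen := List.sum_map_length_le_length_flatten_append ps rest
  have houts := List.sum_map_sum_map_le_sum_map_flatten_append ps rest Prod.fst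
  rw [List.sum_map_mul_left] at hdense
  rw [← hpath] at hlen houts
  have hL := DensePiece.few_long_pieces hrT (hlong.trans (hlen.trans hT))
  have hH := DensePiece.few_dense_pieces (hdense.trans (Nat.mul_le_mul_left _ (houts.trans hout)))
  nlinarith

/-- The "dense piece" claim.  A computation path is modeled as a list of edges,
each annotated with the number of outputs it produces (first component) and
the number of correct outputs among them (second component).  Here `g` plays
the role of `γn` and `b` of `βn`.  If the path is cut into `⌊g/r⌋` consecutive
pieces each producing exactly `r` correct outputs (plus a discarded leftover),
with `r ≤ g/1000`, then the number of pieces exceeds `(999/1000)·g/r`; and if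
moreover the path has length at most `T`, produces at most `b` outputs in
total, and `r ≤ g·n/(20000·T)`, then some piece has length at most `⌈n/20⌉`,
produces at least `r` correct outputs, and produces at most
`⌊(22/21)·r·b/g⌋` outputs overall. -/
theorem stmt16 (n g b T r : ℕ) (hn : 0 < n) (hr : 0 < r)
    (hrg : 1000 * r ≤ g)
    (path rest : List (ℕ × ℕ)) (ps : List (List (ℕ × ℕ)))
    (hpath : path = ps.flatten ++ rest)
    (hedge : ∀ e ∈ path, e.2 ≤ e.1)
    (hpieces : ∀ P ∈ ps, (P.map Prod.snd).sum = r)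
    (hnum : ps.length = g / r)
    (hT : path.length ≤ T)
    (hout : (path.map Prod.fst).sum ≤ b)
    (hrT : 20000 * r * T ≤ g * n) :
    999 * g < 1000 * ps.length * r ∧
    ∃ P ∈ ps, P.length ≤ (n + 19) / 20 ∧ r ≤ (P.map Prod.snd).sum ∧
      21 * g * (P.map Prod.fst).sum ≤ 22 * r * b :=
  stmt16_general n g b T r hr hrg path rest ps hpath hpieces hnum hT hout hrT
end

section
/- Let T = T1 · T2 where, for a reference R and integer k ≥ 0, h1 is such that if h1 < |T1| then T1[|T1|−h1..|T1|] cannot be factorized into k symbols and k+1 substrings of R, and similarly for h2 and T2. Define h = h2 if h2 < |T2|, and h = h1 + |T2| otherwise. Then if h < |T|, the suffix T[|T|−h..|T|] cannot be factorized into k symbols and k+1 substrings of R. -/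
/-- `S` can be factorized into (at most) `k` single symbols and (at most)
`k+1` substrings of `R`, i.e., `S = u_0 c_1 u_1 ⋯ c_k u_k` with each `c_i` a
symbol and each `u_i` a (possibly empty) substring of `R`. -/
def FactorizableInto (R : List ℕ) (k : ℕ) (S : List ℕ) : Prop :=
  ∃ parts : List (ℕ ⊕ List ℕ),
    (parts.map (Sum.elim (fun a => [a]) id)).flatten = S ∧
    (parts.filter Sum.isLeft).length ≤ k ∧
    (parts.filter Sum.isRight).length ≤ k + 1 ∧
    ∀ u : List ℕ, Sum.inr u ∈ parts → u <:+: R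

/-!
A factorization of `S` is cut at the end of any prefix `P` of `S`: the parts lying entirely
inside `P` are kept, the part containing the cut is truncated (a symbol disappears, a
substring of `R` is replaced by one of its prefixes, again a substring of `R`), and the rest
is discarded. Hence the prefixes of factorizable words are factorizable, and in the merged
text the relevant suffix is either a suffix of `T2` or has a non-factorizable suffix of `T1`
as a prefix.
-/

namespace List

variable {α : Type*}

theorem prefix_append_or_exists_eq_append {P l₁ l₂ : List α} (h : P <+: l₁ ++ l₂) :
    P <+: l₁ ∨ ∃ c, c <+: l₂ ∧ P = l₁ ++ c := by
  rcases prefix_or_prefix_of_prefix h (prefix_append l₁ l₂) with h' | ⟨c, rfl⟩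
  · exact .inl h'
  · exact .inr ⟨c, (prefix_append_right_inj l₁).1 h, rfl⟩

def partsWord (parts : List (α ⊕ List α)) : List α :=
  (parts.map (Sum.elim (fun a => [a]) id)).flatten

@[simp]
theorem partsWord_nil : partsWord ([] : List (α ⊕ List α)) = [] := rfl

@[simp]
theorem partsWord_cons (p : α ⊕ List α) (ps : List (α ⊕ List α)) :
    partsWord (p :: ps) = Sum.elim (fun a => [a]) id p ++ partsWord ps := rfl

theorem exists_partsWord_eq_of_prefix (B : List α → Prop) (hB : ∀ u v, v <+: u → B u → B v) :
    ∀ (parts : List (α ⊕ List α)), (∀ u, Sum.inr u ∈ parts → B u) →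
      ∀ P, P <+: partsWord parts →
      ∃ parts' : List (α ⊕ List α), partsWord parts' = P ∧
        (parts'.filter Sum.isLeft).length ≤ (parts.filter Sum.isLeft).length ∧
        (parts'.filter Sum.isRight).length ≤ (parts.filter Sum.isRight).length ∧
        ∀ u, Sum.inr u ∈ parts' → B u
  | [], _, P, hP => ⟨[], (prefix_nil.1 hP).symm, le_rfl, le_rfl, by simp⟩
  | p :: ps, hps, P, hP => by
    rcases prefix_append_or_exists_eq_append (partsWord_cons p ps ▸ hP) with hP | ⟨c, hc, rfl⟩
    · cases p with
      | inl a =>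
        rcases prefix_cons_iff.1 hP with rfl | ⟨t, rfl, ht⟩
        · exact ⟨[], rfl, by simp, by simp, by simp⟩
        · obtain rfl := prefix_nil.1 ht
          exact ⟨[.inl a], rfl, by simp [filter_cons], by simp, by simp⟩
      | inr u =>
        refine ⟨[.inr P], by simp, by simp, by simp [filter_cons], ?_⟩
        simp only [mem_singleton, Sum.inr.injEq, forall_eq]
        exact hB u P hP (hps u mem_cons_self)
    · obtain ⟨parts', rfl, hl, hr, hB'⟩ :=
        exists_partsWord_eq_of_prefix B hB ps (fun u hu => hps u (mem_cons_of_mem p hu)) c hc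
      refine ⟨p :: parts', rfl, ?_, ?_, ?_⟩
      · cases p <;> simpa [filter_cons] using hl
      · cases p <;> simpa [filter_cons] using hr
      · rintro u (_ | ⟨_, hu⟩)
        exacts [hps u mem_cons_self, hB' u hu]

end List

theorem FactorizableInto.of_prefix {R : List ℕ} {k : ℕ} {S P : List ℕ}
    (hS : FactorizableInto R k S) (hP : P <+: S) : FactorizableInto R k P := by
  obtain ⟨parts, rfl, hl, hr, hR⟩ := hS
  obtain ⟨parts', rfl, hl', hr', hR'⟩ := List.exists_partsWord_eq_of_prefix (· <:+: R)
    (fun _ _ hvu huR => hvu.isInfix.trans huR) parts hR P hP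
  exact ⟨parts', rfl, hl'.trans hl, hr'.trans hr, hR'⟩

theorem stmt17_general (R T1 T2 : List ℕ) (k h1 h2 : ℕ)
    (H1 : h1 < T1.length →
      ¬ FactorizableInto R k (T1.drop (T1.length - h1 - 1)))
    (H2 : h2 < T2.length →
      ¬ FactorizableInto R k (T2.drop (T2.length - h2 - 1))) :
    (if h2 < T2.length then h2 else h1 + T2.length) < (T1 ++ T2).length →
      ¬ FactorizableInto R k ((T1 ++ T2).drop
        ((T1 ++ T2).length - (if h2 < T2.length then h2 else h1 + T2.length) - 1)) := by
  rw [List.length_append]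
  intro hlt
  split_ifs at hlt ⊢ with hc
  · rw [show T1.length + T2.length - h2 - 1 = T1.length + (T2.length - h2 - 1) by omega,
      List.drop_length_add_append]
    exact H2 hc
  · have hlt₁ : h1 < T1.length := by omega
    rw [show T1.length + T2.length - (h1 + T2.length) - 1 = T1.length - h1 - 1 by omega,
      List.drop_append_of_le_length (by omega)]
    exact fun hF => H1 hlt₁ (hF.of_prefix (List.prefix_append _ _))

/-- Merging two suffix random access data structures: let `T = T1 · T2`, where
`h1 < |T1|` implies the length-`(h1+1)` suffix of `T1` is not factorizable
into `k` symbols and `k+1` substrings of `R` (and similarly for `h2`, `T2`).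
With `h := h2` if `h2 < |T2|` and `h := h1 + |T2|` otherwise: if `h < |T|`,
then the length-`(h+1)` suffix of `T` is not factorizable either. -/
theorem stmt17 (R T1 T2 : List ℕ) (k h1 h2 : ℕ)
    (hh1 : h1 ≤ T1.length) (hh2 : h2 ≤ T2.length)
    (H1 : h1 < T1.length →
      ¬ FactorizableInto R k (T1.drop (T1.length - h1 - 1)))
    (H2 : h2 < T2.length →
      ¬ FactorizableInto R k (T2.drop (T2.length - h2 - 1))) :
    (if h2 < T2.length then h2 else h1 + T2.length) < (T1 ++ T2).length →
      ¬ FactorizableInto R k ((T1 ++ T2).drop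
        ((T1 ++ T2).length - (if h2 < T2.length then h2 else h1 + T2.length) - 1)) :=
  stmt17_general R T1 T2 k h1 h2 H1 H2
end
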